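/- arXiv:2201.08012 — 2 statements merged into one kernel-verified Lean document; each statement's English description precedes it below -/
import Mathlib

section
/- Let τ* = E[Y(1) − Y(0) | S = 0]. Under the assumptions of unconfoundedness (Y(0),Y(1)) ⫫ A | X, S=1, positivity of propensity score 0 < c ≤ π(X) ≤ 1−c < 1, mean exchangeability E[Y(a) | X, S=1] = E[Y(a) | X, S=0] for a ∈ {0,1}, and positivity of participation probability ρ(X) > c > 0, it holds that τ* = E[ A w*(1,X) Y − (1−A) w*(0,X) Y | S=1 ], where w*(a,x) = (a/π(x) + (1−a)/(1−π(x))) · (E[S](1−ρ(x)))/((1−E[S]) ρ(x)). -/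
open MeasureTheory ProbabilityTheory

section CondIndepAux

set_option linter.unusedSectionVars false

variable {Ω β : Type*} {m : MeasurableSpace Ω} [mΩ : MeasurableSpace Ω] [StandardBorelSpace Ω]
  [MeasurableSpace β] {ν : Measure Ω} [IsFiniteMeasure ν]
  {F : Ω → β} {A : Ω → ℝ}

lemma aux_indicator_eq (hA01 : ∀ ω, A ω = 0 ∨ A ω = 1) :
    (A ⁻¹' {1}).indicator (fun _ => (1:ℝ)) = A := by
  funext ω
  rcases hA01 ω with h | h <;> simp [Set.indicator_apply, Set.mem_preimage, h]

lemma aux_A_nonneg (hA01 : ∀ ω, A ω = 0 ∨ A ω = 1) (ω : Ω) : 0 ≤ A ω := by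
  rcases hA01 ω with h | h <;> simp [h]

lemma aux_A_le_one (hA01 : ∀ ω, A ω = 0 ∨ A ω = 1) (ω : Ω) : A ω ≤ 1 := by
  rcases hA01 ω with h | h <;> simp [h]

lemma aux_A_int (hA : Measurable A) (hA01 : ∀ ω, A ω = 0 ∨ A ω = 1) :
    Integrable A ν :=
  Integrable.mono' (integrable_const 1) hA.aestronglyMeasurable
    (ae_of_all _ fun ω => by
      rw [Real.norm_eq_abs, abs_of_nonneg (aux_A_nonneg hA01 ω)]
      exact aux_A_le_one hA01 ω)

lemma aux_base (hm : m ≤ mΩ) (hF : Measurable F) (hA : Measurable A)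
    (hA01 : ∀ ω, A ω = 0 ∨ A ω = 1)
    (hindep : CondIndepFun m hm F A ν)
    {s u : Set Ω} (hs : MeasurableSet[MeasurableSpace.comap F inferInstance] s)
    (hu : MeasurableSet[m] u) :
    ∫ ω in s ∩ u, A ω ∂ν = ∫ ω in s ∩ u, (ν[A|m]) ω ∂ν := by
  have hsΩ : MeasurableSet s := hF.comap_le _ hs
  have huΩ : MeasurableSet u := hm u hu
  have hB : MeasurableSet[MeasurableSpace.comap A inferInstance] (A ⁻¹' {1}) :=
    ⟨{1}, measurableSet_singleton 1, rfl⟩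
  have hkey := (condIndepFun_iff m hm F A hF hA ν).mp hindep s (A ⁻¹' {1}) hs hB
  rw [aux_indicator_eq hA01] at hkey
  -- hkey : ν[(s ∩ A⁻¹'{1}).indicator 1|m] =ᵐ[ν] ν[s.indicator 1|m] * ν[A|m]  (roughly)
  have hind_eq : (s ∩ A ⁻¹' {1}).indicator (fun _ => (1:ℝ))
      = fun ω => s.indicator A ω := by
    funext ω
    by_cases hω : ω ∈ s <;> rcases hA01 ω with h | h <;>
      simp [Set.indicator_apply, hω, h]
  have hint1 : Integrable ((s ∩ A ⁻¹' {1}).indicator (fun _ => (1:ℝ))) ν :=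
    (integrable_const (1:ℝ)).indicator (hsΩ.inter (hA (measurableSet_singleton 1)))
  have hqsm : StronglyMeasurable[m] (ν[A|m]) := stronglyMeasurable_condExp
  have hq_int : Integrable (ν[A|m]) ν := integrable_condExp
  have hsind_int : Integrable (s.indicator (fun _ => (1:ℝ))) ν :=
    (integrable_const (1:ℝ)).indicator hsΩ
  have hqs_int : Integrable ((ν[A|m]) * s.indicator (fun _ => (1:ℝ))) ν :=
    Integrable.mono' hq_int.abs
      ((hqsm.mono hm).aestronglyMeasurable.mul hsind_int.aestronglyMeasurable)
      (ae_of_all _ fun ω => by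
        by_cases hω : ω ∈ s <;>
          simp [Set.indicator_apply, hω, abs_mul, abs_nonneg])
  have hpull : ν[(ν[A|m]) * s.indicator (fun _ => (1:ℝ))|m]
      =ᵐ[ν] (ν[A|m]) * ν[s.indicator (fun _ => (1:ℝ))|m] :=
    condExp_mul_of_stronglyMeasurable_left hqsm hqs_int hsind_int
  calc ∫ ω in s ∩ u, A ω ∂ν = ∫ ω in u, s.indicator A ω ∂ν := by
        rw [setIntegral_indicator hsΩ, Set.inter_comm]
    _ = ∫ ω in u, (s ∩ A ⁻¹' {1}).indicator (fun _ => (1:ℝ)) ω ∂ν := by rw [hind_eq]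
    _ = ∫ ω in u, (ν[(s ∩ A ⁻¹' {1}).indicator (fun _ => (1:ℝ))|m]) ω ∂ν :=
        (setIntegral_condExp hm hint1 hu).symm
    _ = ∫ ω in u, (ν[s.indicator (fun _ => (1:ℝ))|m] * ν[A|m]) ω ∂ν :=
        setIntegral_congr_ae huΩ (hkey.mono fun ω hω _ => hω)
    _ = ∫ ω in u, ((ν[A|m]) * ν[s.indicator (fun _ => (1:ℝ))|m]) ω ∂ν := by
        simp_rw [Pi.mul_apply, mul_comm]
    _ = ∫ ω in u, (ν[(ν[A|m]) * s.indicator (fun _ => (1:ℝ))|m]) ω ∂ν :=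
        setIntegral_congr_ae huΩ (hpull.mono fun ω hω _ => hω.symm)
    _ = ∫ ω in u, ((ν[A|m]) * s.indicator (fun _ => (1:ℝ))) ω ∂ν :=
        setIntegral_condExp hm hqs_int hu
    _ = ∫ ω in u, s.indicator (ν[A|m]) ω ∂ν := by
        refine setIntegral_congr_ae huΩ (ae_of_all _ fun ω _ => ?_)
        by_cases hω : ω ∈ s <;> simp [Set.indicator_apply, hω]
    _ = ∫ ω in s ∩ u, (ν[A|m]) ω ∂ν := by rw [setIntegral_indicator hsΩ, Set.inter_comm]
lemma aux_lintegral (hm : m ≤ mΩ) (hF : Measurable F) (hA : Measurable A)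
    (hA01 : ∀ ω, A ω = 0 ∨ A ω = 1)
    (hindep : CondIndepFun m hm F A ν)
    {u : Set Ω} (hu : MeasurableSet[m] u) :
    ∀ ⦃h : Ω → ENNReal⦄, Measurable[MeasurableSpace.comap F inferInstance] h →
      ∫⁻ ω in u, h ω * ENNReal.ofReal (A ω) ∂ν
        = ∫⁻ ω in u, h ω * ENNReal.ofReal ((ν[A|m]) ω) ∂ν := by
  have hFle : MeasurableSpace.comap F inferInstance ≤ mΩ := hF.comap_le
  have hA' : Measurable fun ω => ENNReal.ofReal (A ω) := ENNReal.measurable_ofReal.comp hA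
  have hq_meas : Measurable (ν[A|m]) := (stronglyMeasurable_condExp.mono hm).measurable
  have hq' : Measurable fun ω => ENNReal.ofReal ((ν[A|m]) ω) :=
    ENNReal.measurable_ofReal.comp hq_meas
  have hq0 : 0 ≤ᵐ[ν] ν[A|m] := condExp_nonneg (ae_of_all _ (aux_A_nonneg hA01))
  refine @Measurable.ennreal_induction Ω (MeasurableSpace.comap F inferInstance)
    (fun h => ∫⁻ ω in u, h ω * ENNReal.ofReal (A ω) ∂ν
      = ∫⁻ ω in u, h ω * ENNReal.ofReal ((ν[A|m]) ω) ∂ν) ?_ ?_ ?_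
  · intro c s hs
    have hsΩ : MeasurableSet s := hFle _ hs
    have e1 : ∀ g : Ω → ENNReal, (fun ω => s.indicator (fun _ => c) ω * g ω)
        = fun ω => s.indicator (fun ω' => c * g ω') ω := by
      intro g; funext ω; by_cases hω : ω ∈ s <;> simp [Set.indicator_apply, hω]
    rw [e1 (fun ω => ENNReal.ofReal (A ω)), e1 (fun ω => ENNReal.ofReal ((ν[A|m]) ω)),
        lintegral_indicator hsΩ, lintegral_indicator hsΩ,
        Measure.restrict_restrict hsΩ,
        lintegral_const_mul _ hA', lintegral_const_mul _ hq']
    congr 1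
    have hbase := aux_base hm hF hA hA01 hindep hs hu
    have hAR : Integrable A (ν.restrict (s ∩ u)) := (aux_A_int hA hA01).restrict
    have hqR : Integrable (ν[A|m]) (ν.restrict (s ∩ u)) :=
      (integrable_condExp (m := m)).restrict
    rw [← ofReal_integral_eq_lintegral_ofReal hAR (ae_of_all _ (aux_A_nonneg hA01)),
        ← ofReal_integral_eq_lintegral_ofReal hqR (ae_restrict_of_ae hq0), hbase]
  · intro f g _ hfm _ hPf hPg
    have hfM : Measurable f := hfm.mono hFle le_rfl
    simp_rw [Pi.add_apply, add_mul]
    rw [lintegral_add_left (f := fun ω => f ω * ENNReal.ofReal (A ω)) (hfM.mul hA'),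
      lintegral_add_left (f := fun ω => f ω * ENNReal.ofReal ((ν[A|m]) ω)) (hfM.mul hq'), hPf, hPg]
  · intro f hfm hmono hPf
    have hfM : ∀ n, Measurable (f n) := fun n => (hfm n).mono hFle le_rfl
    simp_rw [ENNReal.iSup_mul]
    rw [lintegral_iSup (f := fun n ω => f n ω * ENNReal.ofReal (A ω)) (fun n => (hfM n).mul hA')
          (fun i j hij ω => mul_le_mul_left (hmono hij ω) _),
        lintegral_iSup (f := fun n ω => f n ω * ENNReal.ofReal ((ν[A|m]) ω)) (fun n => (hfM n).mul hq')
          (fun i j hij ω => mul_le_mul_left (hmono hij ω) _)]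
    exact iSup_congr hPf

lemma aux_setIntegral (hm : m ≤ mΩ) (hF : Measurable F) (hA : Measurable A)
    (hA01 : ∀ ω, A ω = 0 ∨ A ω = 1) (hindep : CondIndepFun m hm F A ν)
    {h : Ω → ℝ} (hhm : Measurable[MeasurableSpace.comap F inferInstance] h)
    (hh : Integrable h ν) {u : Set Ω} (hu : MeasurableSet[m] u) :
    ∫ ω in u, h ω * A ω ∂ν = ∫ ω in u, h ω * (ν[A|m]) ω ∂ν := by
  have hFle : MeasurableSpace.comap F inferInstance ≤ mΩ := hF.comap_le
  have hhM : Measurable h := hhm.mono hFle le_rfl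
  have hq_meas : Measurable (ν[A|m]) := (stronglyMeasurable_condExp.mono hm).measurable
  have hq0 : 0 ≤ᵐ[ν] ν[A|m] := condExp_nonneg (ae_of_all _ (aux_A_nonneg hA01))
  have hq1 : ∀ᵐ ω ∂ν, (ν[A|m]) ω ≤ 1 := by
    have h1 : ν[A|m] ≤ᵐ[ν] ν[(fun _ => (1:ℝ))|m] :=
      condExp_mono (aux_A_int hA hA01) (integrable_const 1) (ae_of_all _ (aux_A_le_one hA01))
    rw [condExp_const hm (1:ℝ)] at h1
    exact h1
  have key : ∀ g : Ω → ℝ, Measurable[MeasurableSpace.comap F inferInstance] g →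
      Integrable g ν → (∀ ω, 0 ≤ g ω) →
      ∫ ω in u, g ω * A ω ∂ν = ∫ ω in u, g ω * (ν[A|m]) ω ∂ν := by
    intro g hgm hgint hg0
    have hgM : Measurable g := hgm.mono hFle le_rfl
    have hgA_int : Integrable (fun ω => g ω * A ω) (ν.restrict u) :=
      (Integrable.mono' hgint.abs ((hgM.mul hA).aestronglyMeasurable)
        (ae_of_all _ fun ω => by
          rw [Real.norm_eq_abs, Pi.mul_apply, abs_mul, abs_of_nonneg (hg0 ω),
            abs_of_nonneg (aux_A_nonneg hA01 ω)]
          calc g ω * A ω ≤ g ω * 1 :=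
                mul_le_mul_of_nonneg_left (aux_A_le_one hA01 ω) (hg0 ω)
            _ = g ω := mul_one _)).restrict
    have hgq_int : Integrable (fun ω => g ω * (ν[A|m]) ω) (ν.restrict u) := by
      refine (Integrable.mono' hgint.abs ((hgM.mul hq_meas).aestronglyMeasurable) ?_).restrict
      filter_upwards [hq0, hq1] with ω h0 h1
      rw [Real.norm_eq_abs, Pi.mul_apply, abs_mul, abs_of_nonneg (hg0 ω), abs_of_nonneg h0]
      calc g ω * (ν[A|m]) ω ≤ g ω * 1 := mul_le_mul_of_nonneg_left h1 (hg0 ω)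
        _ = g ω := mul_one _
    rw [integral_eq_lintegral_of_nonneg_ae
          (ae_of_all _ fun ω => mul_nonneg (hg0 ω) (aux_A_nonneg hA01 ω))
          hgA_int.aestronglyMeasurable,
        integral_eq_lintegral_of_nonneg_ae
          (ae_restrict_of_ae (hq0.mono fun ω h0 => mul_nonneg (hg0 ω) h0))
          hgq_int.aestronglyMeasurable]
    congr 1
    rw [show (fun ω => ENNReal.ofReal (g ω * A ω))
          = fun ω => ENNReal.ofReal (g ω) * ENNReal.ofReal (A ω) from
          funext fun ω => ENNReal.ofReal_mul (hg0 ω),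
        show (fun ω => ENNReal.ofReal (g ω * (ν[A|m]) ω))
          = fun ω => ENNReal.ofReal (g ω) * ENNReal.ofReal ((ν[A|m]) ω) from
          funext fun ω => ENNReal.ofReal_mul (hg0 ω)]
    exact aux_lintegral hm hF hA hA01 hindep hu (ENNReal.measurable_ofReal.comp hgm)
  have hsub : ∀ ω, h ω = max (h ω) 0 - max (-h ω) 0 :=
    fun ω => (max_zero_sub_max_neg_zero_eq_self (h ω)).symm
  have e : ∀ q : Ω → ℝ, (fun ω => h ω * q ω)
      = fun ω => (max (h ω) 0) * q ω - (max (-h ω) 0) * q ω := by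
    intro q; funext ω
    rw [show h ω * q ω = (max (h ω) 0 - max (-h ω) 0) * q ω by rw [← hsub ω], sub_mul]
  have hpb : ∀ ω, |max (h ω) 0| ≤ |h ω| := fun ω => by
    rw [abs_of_nonneg (le_max_right _ _)]
    exact max_le (le_abs_self _) (abs_nonneg _)
  have hnb : ∀ ω, |max (-h ω) 0| ≤ |h ω| := fun ω => by
    rw [abs_of_nonneg (le_max_right _ _)]
    exact max_le (neg_le_abs _) (abs_nonneg _)
  have hmk : ∀ g w : Ω → ℝ, Measurable g → Measurable w → (∀ ω, |g ω| ≤ |h ω|) →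
      (∀ᵐ ω ∂ν, |w ω| ≤ 1) → Integrable (fun ω => g ω * w ω) ν := by
    intro g w hg hw hgb hwb
    refine Integrable.mono' hh.abs ((hg.mul hw).aestronglyMeasurable) ?_
    filter_upwards [hwb] with ω h1
    rw [Real.norm_eq_abs, abs_mul]
    calc |g ω| * |w ω| ≤ |h ω| * 1 := mul_le_mul (hgb ω) h1 (abs_nonneg _) (abs_nonneg _)
      _ = |h ω| := mul_one _
  have hAbd : ∀ᵐ ω ∂ν, |A ω| ≤ 1 := ae_of_all _ fun ω => by
    rw [abs_of_nonneg (aux_A_nonneg hA01 ω)]; exact aux_A_le_one hA01 ω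
  have hqbd : ∀ᵐ ω ∂ν, |(ν[A|m]) ω| ≤ 1 := by
    filter_upwards [hq0, hq1] with ω h0 h1
    rw [abs_of_nonneg h0]; exact h1
  have hpM : Measurable (fun ω => max (h ω) 0) := hhM.max measurable_const
  have hnM : Measurable (fun ω => max (-h ω) 0) := hhM.neg.max measurable_const
  rw [e A, e (fun ω => (ν[A|m]) ω)]
  rw [integral_sub ((hmk _ _ hpM hA hpb hAbd).restrict)
        ((hmk _ _ hnM hA hnb hAbd).restrict),
      integral_sub ((hmk _ _ hpM hq_meas hpb hqbd).restrict)
        ((hmk _ _ hnM hq_meas hnb hqbd).restrict),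
      key _ (hhm.max measurable_const) hh.pos_part (fun ω => le_max_right _ _),
      key (fun ω => max (-h ω) 0) (hhm.neg.max measurable_const) hh.neg_part (fun ω => le_max_right _ _)]

theorem condexp_mul_of_condIndepFun (hm : m ≤ mΩ) (hF : Measurable F) (hA : Measurable A)
    (hA01 : ∀ ω, A ω = 0 ∨ A ω = 1) (hindep : CondIndepFun m hm F A ν)
    {h : Ω → ℝ} (hhm : Measurable[MeasurableSpace.comap F inferInstance] h)
    (hh : Integrable h ν) :
    ν[fun ω => h ω * A ω|m] =ᵐ[ν] fun ω => (ν[h|m]) ω * (ν[A|m]) ω := by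
  have hFle : MeasurableSpace.comap F inferInstance ≤ mΩ := hF.comap_le
  have hhM : Measurable h := hhm.mono hFle le_rfl
  have hq_meas : Measurable (ν[A|m]) := (stronglyMeasurable_condExp.mono hm).measurable
  have hq0 : 0 ≤ᵐ[ν] ν[A|m] := condExp_nonneg (ae_of_all _ (aux_A_nonneg hA01))
  have hq1 : ∀ᵐ ω ∂ν, (ν[A|m]) ω ≤ 1 := by
    have h1 : ν[A|m] ≤ᵐ[ν] ν[(fun _ => (1:ℝ))|m] :=
      condExp_mono (aux_A_int hA hA01) (integrable_const 1) (ae_of_all _ (aux_A_le_one hA01))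
    rw [condExp_const hm (1:ℝ)] at h1
    exact h1
  have hqbd : ∀ᵐ ω ∂ν, |(ν[A|m]) ω| ≤ 1 := by
    filter_upwards [hq0, hq1] with ω h0 h1
    rw [abs_of_nonneg h0]; exact h1
  have hhA_int : Integrable (fun ω => h ω * A ω) ν := by
    refine Integrable.mono' hh.abs ((hhM.mul hA).aestronglyMeasurable) (ae_of_all _ fun ω => ?_)
    rw [Real.norm_eq_abs, abs_mul]
    calc |h ω| * |A ω| ≤ |h ω| * 1 := by
          refine mul_le_mul_of_nonneg_left ?_ (abs_nonneg _)
          rw [abs_of_nonneg (aux_A_nonneg hA01 ω)]; exact aux_A_le_one hA01 ω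
      _ = |h ω| := mul_one _
  have hqh_int : Integrable ((ν[A|m]) * h) ν := by
    refine Integrable.mono' hh.abs
      ((hq_meas.mul hhM).aestronglyMeasurable) ?_
    filter_upwards [hqbd] with ω h1
    rw [Pi.mul_apply, Real.norm_eq_abs, abs_mul]
    calc |(ν[A|m]) ω| * |h ω| ≤ 1 * |h ω| := mul_le_mul_of_nonneg_right h1 (abs_nonneg _)
      _ = |h ω| := one_mul _
  have hpull : ν[(ν[A|m]) * h|m] =ᵐ[ν] (ν[A|m]) * ν[h|m] :=
    condExp_mul_of_stronglyMeasurable_left stronglyMeasurable_condExp hqh_int hh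
  have hg_int : Integrable (fun ω => (ν[h|m]) ω * (ν[A|m]) ω) ν := by
    refine Integrable.mono' (integrable_condExp (m := m) (μ := ν) (f := h)).abs
      (((stronglyMeasurable_condExp.mono hm).measurable.mul hq_meas).aestronglyMeasurable) ?_
    filter_upwards [hqbd] with ω h1
    rw [Real.norm_eq_abs, abs_mul]
    calc |(ν[h|m]) ω| * |(ν[A|m]) ω| ≤ |(ν[h|m]) ω| * 1 :=
          mul_le_mul_of_nonneg_left h1 (abs_nonneg _)
      _ = |(ν[h|m]) ω| := mul_one _
  refine (ae_eq_condExp_of_forall_setIntegral_eq hm hhA_int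
    (fun s _ _ => hg_int.integrableOn) (fun s hs _ => ?_)
    ((stronglyMeasurable_condExp.mul stronglyMeasurable_condExp).aestronglyMeasurable)).symm
  calc ∫ ω in s, (ν[h|m]) ω * (ν[A|m]) ω ∂ν
      = ∫ ω in s, ((ν[A|m]) * ν[h|m]) ω ∂ν := by
        refine setIntegral_congr_ae (hm s hs) (ae_of_all _ fun ω _ => ?_)
        simp [mul_comm]
    _ = ∫ ω in s, (ν[(ν[A|m]) * h|m]) ω ∂ν :=
        setIntegral_congr_ae (hm s hs) (hpull.mono fun ω e _ => e.symm)
    _ = ∫ ω in s, ((ν[A|m]) * h) ω ∂ν := setIntegral_condExp hm hqh_int hs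
    _ = ∫ ω in s, h ω * (ν[A|m]) ω ∂ν := by
        refine setIntegral_congr_ae (hm s hs) (ae_of_all _ fun ω _ => ?_)
        simp [mul_comm]
    _ = ∫ ω in s, h ω * A ω ∂ν :=
        (aux_setIntegral hm hF hA hA01 hindep hhm hh hs).symm

end CondIndepAux

section CondTransfer

variable {Ω : Type*} {m : MeasurableSpace Ω} [mΩ : MeasurableSpace Ω]
  {μ : Measure Ω} [IsProbabilityMeasure μ] {S : Ω → ℝ}

lemma aux_S_eq_indicator (hS01 : ∀ ω, S ω = 0 ∨ S ω = 1) (g : Ω → ℝ) :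
    (fun ω => S ω * g ω) = {ω | S ω = 1}.indicator g := by
  funext ω
  rcases hS01 ω with h | h <;> simp [Set.indicator_apply, Set.mem_setOf_eq, h]

lemma aux_integrable_cond_iff (hSmeas : Measurable S) (hS01 : ∀ ω, S ω = 0 ∨ S ω = 1)
    (hE0 : μ {ω | S ω = 1} ≠ 0) (g : Ω → ℝ) :
    Integrable g (μ[|{ω | S ω = 1}]) ↔ Integrable (fun ω => S ω * g ω) μ := by
  have hEmeas : MeasurableSet {ω | S ω = 1} := hSmeas (measurableSet_singleton 1)
  rw [aux_S_eq_indicator hS01 g, integrable_indicator_iff hEmeas, ProbabilityTheory.cond,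
    integrable_smul_measure (ENNReal.inv_ne_zero.mpr (measure_ne_top μ _))
      (ENNReal.inv_ne_top.mpr hE0)]
  exact Iff.rfl

lemma aux_setIntegral_cond (hSmeas : Measurable S) (hS01 : ∀ ω, S ω = 0 ∨ S ω = 1)
    (hE0 : μ {ω | S ω = 1} ≠ 0) (g : Ω → ℝ) {u : Set Ω} (hu : MeasurableSet u) :
    ∫ ω in u, S ω * g ω ∂μ
      = (μ {ω | S ω = 1}).toReal * ∫ ω in u, g ω ∂(μ[|{ω | S ω = 1}]) := by
  have hEmeas : MeasurableSet {ω | S ω = 1} := hSmeas (measurableSet_singleton 1)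
  rw [aux_S_eq_indicator hS01 g, setIntegral_indicator hEmeas, ProbabilityTheory.cond,
    Measure.restrict_smul, Measure.restrict_restrict hu, integral_smul_measure,
    ENNReal.toReal_inv, smul_eq_mul, ← mul_assoc,
    mul_inv_cancel₀ (ENNReal.toReal_ne_zero.mpr ⟨hE0, measure_ne_top μ _⟩), one_mul]

lemma aux_condexp_indicator_mul (hm : m ≤ mΩ)
    (hSmeas : Measurable S) (hS01 : ∀ ω, S ω = 0 ∨ S ω = 1)
    (hE0 : μ {ω | S ω = 1} ≠ 0)
    {f h : Ω → ℝ} (hf : Integrable f μ)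
    (hhm : AEStronglyMeasurable[m] h μ)
    (hSh : Integrable (fun ω => S ω * h ω) μ)
    (hνh : (μ[|{ω | S ω = 1}])[f|m] =ᵐ[μ[|{ω | S ω = 1}]] h) :
    μ[(fun ω => S ω * f ω)|m] =ᵐ[μ] fun ω => h ω * (μ[S|m]) ω := by
  haveI : IsProbabilityMeasure (μ[|{ω | S ω = 1}]) := cond_isProbabilityMeasure hE0
  have hS0 : ∀ ω, 0 ≤ S ω := fun ω => by rcases hS01 ω with h'|h' <;> simp [h']
  have hSint : Integrable S μ := by
    refine Integrable.mono' (integrable_const 1) hSmeas.aestronglyMeasurable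
      (ae_of_all _ fun ω => ?_)
    rcases hS01 ω with h'|h' <;> simp [h']
  have hSf : Integrable (fun ω => S ω * f ω) μ := by
    refine Integrable.mono' hf.abs
      (hSmeas.aestronglyMeasurable.mul hf.aestronglyMeasurable)
      (ae_of_all _ fun ω => ?_)
    rcases hS01 ω with h'|h' <;> simp [h', abs_mul, abs_nonneg]
  have hfν : Integrable f (μ[|{ω | S ω = 1}]) :=
    (aux_integrable_cond_iff hSmeas hS01 hE0 f).mpr hSf
  have hstep3 : ∀ u, MeasurableSet[m] u →
      ∫ ω in u, S ω * f ω ∂μ = ∫ ω in u, S ω * h ω ∂μ := by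
    intro u hu
    rw [aux_setIntegral_cond hSmeas hS01 hE0 f (hm u hu),
        aux_setIntegral_cond hSmeas hS01 hE0 h (hm u hu)]
    congr 1
    rw [← setIntegral_condExp hm hfν hu]
    exact setIntegral_congr_ae (hm u hu) (hνh.mono fun ω e _ => e)
  have hhS_int : Integrable (h * S) μ :=
    hSh.congr (ae_of_all _ fun ω => mul_comm (S ω) (h ω))
  have hpull : μ[h * S|m] =ᵐ[μ] h * μ[S|m] :=
    condExp_mul_of_aestronglyMeasurable_left hhm hhS_int hSint
  -- integrability of h * μ[S|m]
  have hD0 : 0 ≤ᵐ[μ] μ[S|m] := condExp_nonneg (ae_of_all _ hS0)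
  have habsS : Integrable ((fun ω => |h ω|) * S) μ := by
    refine hSh.abs.congr (ae_of_all _ fun ω => ?_)
    rcases hS01 ω with h'|h' <;> simp [h', abs_mul]
  have hhabs_m : AEStronglyMeasurable[m] (fun ω => |h ω|) μ := by
    refine ⟨fun ω => ‖hhm.mk h ω‖, hhm.stronglyMeasurable_mk.norm, ?_⟩
    filter_upwards [hhm.ae_eq_mk] with ω e
    rw [← e, Real.norm_eq_abs]
  have hpull_abs : μ[(fun ω => |h ω|) * S|m] =ᵐ[μ] (fun ω => |h ω|) * μ[S|m] :=
    condExp_mul_of_aestronglyMeasurable_left hhabs_m habsS hSint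
  have hint_absD : Integrable ((fun ω => |h ω|) * μ[S|m]) μ :=
    integrable_condExp.congr hpull_abs
  have hhaesm : AEStronglyMeasurable h μ :=
    ((hhm.stronglyMeasurable_mk.mono hm).aestronglyMeasurable).congr hhm.ae_eq_mk.symm
  have hg_int : Integrable (fun ω => h ω * (μ[S|m]) ω) μ := by
    refine Integrable.mono' hint_absD
      (hhaesm.mul (stronglyMeasurable_condExp.mono hm).aestronglyMeasurable) ?_
    filter_upwards [hD0] with ω h0
    rw [Real.norm_eq_abs, abs_mul, abs_of_nonneg h0]
    exact le_rfl
  have hgm' : AEStronglyMeasurable[m] (fun ω => h ω * (μ[S|m]) ω) μ := by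
    refine ⟨fun ω => hhm.mk h ω * (μ[S|m]) ω,
      hhm.stronglyMeasurable_mk.mul stronglyMeasurable_condExp, ?_⟩
    filter_upwards [hhm.ae_eq_mk] with ω e
    rw [e]
  refine (ae_eq_condExp_of_forall_setIntegral_eq hm hSf
    (fun s _ _ => hg_int.integrableOn) (fun s hs _ => ?_) hgm').symm
  calc ∫ ω in s, h ω * (μ[S|m]) ω ∂μ
      = ∫ ω in s, (μ[h * S|m]) ω ∂μ :=
        setIntegral_congr_ae (hm s hs) (hpull.mono fun ω e _ => e.symm)
    _ = ∫ ω in s, (h * S) ω ∂μ := setIntegral_condExp hm hhS_int hs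
    _ = ∫ ω in s, S ω * h ω ∂μ := by
        refine setIntegral_congr_ae (hm s hs) (ae_of_all _ fun ω _ => ?_)
        simp [mul_comm]
    _ = ∫ ω in s, S ω * f ω ∂μ := (hstep3 s hs).symm

end CondTransfer

theorem main_aux
    {Ω : Type*} {m m' : MeasurableSpace Ω} [mΩ : MeasurableSpace Ω] [StandardBorelSpace Ω]
    (hm : m ≤ mΩ) (hmm' : m ≤ m') (hm' : m' ≤ mΩ)
    (μ : Measure Ω) [IsProbabilityMeasure μ]
    (S A Y0 Y1 : Ω → ℝ)
    (hSmeas : Measurable S) (hAmeas : Measurable A)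
    (hY0meas : Measurable Y0) (hY1meas : Measurable Y1)
    (hS01 : ∀ ω, S ω = 0 ∨ S ω = 1) (hA01 : ∀ ω, A ω = 0 ∨ A ω = 1)
    (hY0int : Integrable Y0 μ) (hY1int : Integrable Y1 μ)
    (p r : Ω → ℝ) (c : ℝ) (hc : 0 < c)
    (hp_bd : ∀ᵐ ω ∂μ, c ≤ p ω ∧ p ω ≤ 1 - c)
    (hr_bd : ∀ᵐ ω ∂μ, c < r ω)
    (hS_pos : 0 < ∫ ω, S ω ∂μ) (hS_lt : ∫ ω, S ω ∂μ < 1)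
    (hρ : μ[S|m] =ᵐ[μ] fun ω => r ω)
    (hπ : μ[(fun ω => S ω * A ω)|m] =ᵐ[μ] fun ω => r ω * p ω)
    (hSm' : StronglyMeasurable[m'] S)
    [IsFiniteMeasure (μ[|{ω | S ω = 1}])]
    (hunconf : CondIndepFun m hm (fun ω => (Y0 ω, Y1 ω)) A (μ[|{ω | S ω = 1}]))
    (hexch0 : μ[Y0|m'] =ᵐ[μ] μ[Y0|m])
    (hexch1 : μ[Y1|m'] =ᵐ[μ] μ[Y1|m]) :
    (∫ ω, (1 - S ω) * (Y1 ω - Y0 ω) ∂μ) / (∫ ω, (1 - S ω) ∂μ)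
      = (∫ ω, S ω *
            (A ω * ((1 / p ω + 0 / (1 - p ω)) *
                ((∫ ω', S ω' ∂μ) * (1 - r ω)) / ((1 - ∫ ω', S ω' ∂μ) * r ω))
              * (if A ω = 1 then Y1 ω else Y0 ω)
            - (1 - A ω) * ((0 / p ω + 1 / (1 - p ω)) *
                ((∫ ω', S ω' ∂μ) * (1 - r ω)) / ((1 - ∫ ω', S ω' ∂μ) * r ω))
              * (if A ω = 1 then Y1 ω else Y0 ω)) ∂μ) / (∫ ω, S ω ∂μ) := by
  classical
  set ES := ∫ ω, S ω ∂μ with hES_def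
  set ν := μ[|{ω | S ω = 1}] with hν_def
  -- Basic facts about S and A
  have hS0 : ∀ ω, 0 ≤ S ω := fun ω => by rcases hS01 ω with h | h <;> simp [h]
  have hS1 : ∀ ω, S ω ≤ 1 := fun ω => by rcases hS01 ω with h | h <;> simp [h]
  have hA0 : ∀ ω, 0 ≤ A ω := fun ω => by rcases hA01 ω with h | h <;> simp [h]
  have hA1 : ∀ ω, A ω ≤ 1 := fun ω => by rcases hA01 ω with h | h <;> simp [h]
  have hSint : Integrable S μ := by
    refine Integrable.mono' (integrable_const 1) hSmeas.aestronglyMeasurable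
      (ae_of_all _ fun ω => ?_)
    rw [Real.norm_eq_abs, abs_of_nonneg (hS0 ω)]; exact hS1 ω
  have hAint : Integrable A μ := by
    refine Integrable.mono' (integrable_const 1) hAmeas.aestronglyMeasurable
      (ae_of_all _ fun ω => ?_)
    rw [Real.norm_eq_abs, abs_of_nonneg (hA0 ω)]; exact hA1 ω
  have hE0 : μ {ω | S ω = 1} ≠ 0 := by
    intro h0
    have hae : ∀ᵐ ω ∂μ, ω ∉ {ω | S ω = 1} := measure_eq_zero_iff_ae_notMem.mp h0
    have hS_ae0 : S =ᵐ[μ] 0 := hae.mono fun ω hω => (hS01 ω).resolve_right hω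
    have : ES = 0 := by rw [hES_def]; exact integral_eq_zero_of_ae hS_ae0
    linarith
  haveI hνprob : IsProbabilityMeasure ν := cond_isProbabilityMeasure hE0
  have hν_ac : ν ≪ μ := cond_absolutelyContinuous
  have hES0 : ES ≠ 0 := ne_of_gt hS_pos
  have hES1 : (1:ℝ) - ES ≠ 0 := by intro h; linarith
  have hES1pos : (0:ℝ) < 1 - ES := by linarith
  -- bounded-multiplier integrability
  have hmul01 : ∀ (B f : Ω → ℝ), Measurable B → (∀ ω, 0 ≤ B ω) → (∀ ω, B ω ≤ 1) →
      Integrable f μ → Integrable (fun ω => B ω * f ω) μ := by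
    intro B f hB hB0 hB1 hf
    refine Integrable.mono' hf.abs
      ((hB.aestronglyMeasurable.mul hf.aestronglyMeasurable :
        AEStronglyMeasurable (fun ω => B ω * f ω) μ))
      (ae_of_all _ fun ω => ?_)
    rw [Real.norm_eq_abs, abs_mul, abs_of_nonneg (hB0 ω)]
    calc B ω * |f ω| ≤ 1 * |f ω| := mul_le_mul_of_nonneg_right (hB1 ω) (abs_nonneg _)
      _ = |f ω| := one_mul _
  have hIcast : ∀ {f g : Ω → ℝ}, Integrable f μ → (∀ ω, f ω = g ω) → Integrable g μ :=
    fun hf h => hf.congr (ae_of_all _ h)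
  have hSA_int : Integrable (fun ω => S ω * A ω) μ := hmul01 S A hSmeas hS0 hS1 hAint
  have hY1A_int : Integrable (fun ω => Y1 ω * A ω) μ := by
    have := hmul01 A Y1 hAmeas hA0 hA1 hY1int
    exact this.congr (ae_of_all _ fun ω => mul_comm (A ω) (Y1 ω))
  have hY0A_int : Integrable (fun ω => Y0 ω * A ω) μ := by
    have := hmul01 A Y0 hAmeas hA0 hA1 hY0int
    exact this.congr (ae_of_all _ fun ω => mul_comm (A ω) (Y0 ω))
  have hSY1_int : Integrable (fun ω => S ω * Y1 ω) μ := hmul01 S Y1 hSmeas hS0 hS1 hY1int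
  have hSY0_int : Integrable (fun ω => S ω * Y0 ω) μ := hmul01 S Y0 hSmeas hS0 hS1 hY0int
  have hSY1A_int : Integrable (fun ω => S ω * (Y1 ω * A ω)) μ :=
    hmul01 S _ hSmeas hS0 hS1 hY1A_int
  have hSY0A_int : Integrable (fun ω => S ω * (Y0 ω * A ω)) μ :=
    hmul01 S _ hSmeas hS0 hS1 hY0A_int
  -- conditional expectations
  set D := μ[S|m] with hD_def
  set g1 := μ[Y1|m] with hg1_def
  set g0 := μ[Y0|m] with hg0_def
  have hD0 : 0 ≤ᵐ[μ] D := condExp_nonneg (ae_of_all _ hS0)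
  have hD1 : D ≤ᵐ[μ] fun _ => (1:ℝ) := by
    have h1 : D ≤ᵐ[μ] μ[(fun _ => (1:ℝ))|m] :=
      condExp_mono hSint (integrable_const 1) (ae_of_all _ hS1)
    rwa [condExp_const hm (1:ℝ)] at h1
  have hr_le1 : ∀ᵐ ω ∂μ, r ω ≤ 1 := by
    filter_upwards [hρ, hD1] with ω e1 e2
    rw [← e1]; exact e2
  -- the exchangeability step
  have hexch_gen : ∀ Y : Ω → ℝ, Measurable Y → Integrable Y μ →
      (μ[Y|m'] =ᵐ[μ] μ[Y|m]) →
      μ[(fun ω => S ω * Y ω)|m] =ᵐ[μ] fun ω => (μ[Y|m]) ω * D ω := by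
    intro Y hYmeas hYint hex
    have hSY : Integrable (S * Y) μ := hmul01 S Y hSmeas hS0 hS1 hYint
    have h1 : μ[S * Y|m'] =ᵐ[μ] S * μ[Y|m'] :=
      condExp_mul_of_stronglyMeasurable_left hSm' hSY hYint
    have h2 : μ[S * Y|m'] =ᵐ[μ] S * μ[Y|m] := h1.trans (hex.mono fun ω e => by
      simp only [Pi.mul_apply]; rw [e])
    have h3 : μ[S * Y|m] =ᵐ[μ] μ[S * μ[Y|m]|m] :=
      (condExp_condExp_of_le hmm' hm').symm.trans (condExp_congr_ae h2)
    have h4 : μ[(μ[Y|m]) * S|m] =ᵐ[μ] (μ[Y|m]) * μ[S|m] := by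
      refine condExp_mul_of_stronglyMeasurable_left stronglyMeasurable_condExp ?_ hSint
      refine Integrable.mono' (integrable_condExp (m := m) (μ := μ) (f := Y)).abs
        (((stronglyMeasurable_condExp.mono hm).measurable.mul hSmeas).aestronglyMeasurable)
        (ae_of_all _ fun ω => ?_)
      rw [Pi.mul_apply, Real.norm_eq_abs, abs_mul]
      calc |(μ[Y|m]) ω| * |S ω| ≤ |(μ[Y|m]) ω| * 1 := by
            refine mul_le_mul_of_nonneg_left ?_ (abs_nonneg _)
            rw [abs_of_nonneg (hS0 ω)]; exact hS1 ω
        _ = |(μ[Y|m]) ω| := mul_one _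
    have h5 : μ[S * μ[Y|m]|m] =ᵐ[μ] μ[(μ[Y|m]) * S|m] :=
      condExp_congr_ae (ae_of_all _ fun ω => mul_comm (S ω) ((μ[Y|m]) ω))
    exact h3.trans (h5.trans h4)
  have hexch1' : μ[(fun ω => S ω * Y1 ω)|m] =ᵐ[μ] fun ω => g1 ω * D ω :=
    hexch_gen Y1 hY1meas hY1int hexch1
  have hexch0' : μ[(fun ω => S ω * Y0 ω)|m] =ᵐ[μ] fun ω => g0 ω * D ω :=
    hexch_gen Y0 hY0meas hY0int hexch0
  -- identification of ν-conditional expectations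
  have hK0 : ∀ f : Ω → ℝ, Integrable f μ → Integrable (fun ω => S ω * f ω) μ →
      μ[(fun ω => S ω * f ω)|m] =ᵐ[μ] fun ω => (ν[f|m]) ω * D ω := by
    intro f hf hSf
    refine aux_condexp_indicator_mul hm hSmeas hS01 hE0 hf
      stronglyMeasurable_condExp.aestronglyMeasurable ?_ Filter.EventuallyEq.rfl
    exact (aux_integrable_cond_iff hSmeas hS01 hE0 _).mp integrable_condExp
  have hq1g1 : ν[Y1|m] =ᵐ[μ] g1 := by
    filter_upwards [hK0 Y1 hY1int hSY1_int, hexch1', hρ, hr_bd] with ω e1 e2 e3 e4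
    have hD_pos : D ω ≠ 0 := by rw [e3]; exact ne_of_gt (lt_trans hc e4)
    exact mul_right_cancel₀ hD_pos (e1.symm.trans e2)
  have hq0g0 : ν[Y0|m] =ᵐ[μ] g0 := by
    filter_upwards [hK0 Y0 hY0int hSY0_int, hexch0', hρ, hr_bd] with ω e1 e2 e3 e4
    have hD_pos : D ω ≠ 0 := by rw [e3]; exact ne_of_gt (lt_trans hc e4)
    exact mul_right_cancel₀ hD_pos (e1.symm.trans e2)
  have hqAπ : ν[A|m] =ᵐ[μ] fun ω => p ω := by
    filter_upwards [hK0 A hAint hSA_int, hπ, hρ, hr_bd] with ω e1 e2 e3 e4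
    have hρ0 : r ω ≠ 0 := ne_of_gt (lt_trans hc e4)
    have h5 : (ν[A|m]) ω * D ω = r ω * p ω := e1.symm.trans e2
    rw [e3] at h5
    exact mul_right_cancel₀ hρ0 (h5.trans (mul_comm _ _))
  -- the unconfoundedness step (product rule under ν)
  have hFmeas : Measurable (fun ω => (Y0 ω, Y1 ω)) := hY0meas.prodMk hY1meas
  have hY1F : Measurable[MeasurableSpace.comap (fun ω => (Y0 ω, Y1 ω)) inferInstance] Y1 :=
    measurable_snd.comp (Measurable.of_comap_le le_rfl)
  have hY0F : Measurable[MeasurableSpace.comap (fun ω => (Y0 ω, Y1 ω)) inferInstance] Y0 :=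
    measurable_fst.comp (Measurable.of_comap_le le_rfl)
  have hY1ν : Integrable Y1 ν := (aux_integrable_cond_iff hSmeas hS01 hE0 Y1).mpr hSY1_int
  have hY0ν : Integrable Y0 ν := (aux_integrable_cond_iff hSmeas hS01 hE0 Y0).mpr hSY0_int
  have hprod1 : ν[(fun ω => Y1 ω * A ω)|m] =ᵐ[ν] fun ω => p ω * g1 ω := by
    have h1 := condexp_mul_of_condIndepFun hm hFmeas hAmeas hA01 hunconf hY1F hY1ν
    refine h1.trans ?_
    filter_upwards [hq1g1.filter_mono hν_ac.ae_le, hqAπ.filter_mono hν_ac.ae_le] with ω e1 e2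
    rw [e1, e2, mul_comm]
  have hprod0 : ν[(fun ω => Y0 ω * A ω)|m] =ᵐ[ν] fun ω => p ω * g0 ω := by
    have h1 := condexp_mul_of_condIndepFun hm hFmeas hAmeas hA01 hunconf hY0F hY0ν
    refine h1.trans ?_
    filter_upwards [hq0g0.filter_mono hν_ac.ae_le, hqAπ.filter_mono hν_ac.ae_le] with ω e1 e2
    rw [e1, e2, mul_comm]
  -- measurability and integrability of the weighted targets
  have hπg_m : ∀ g : Ω → ℝ, StronglyMeasurable[m] g →
      AEStronglyMeasurable[m] (fun ω => p ω * g ω) μ := by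
    intro g hg
    exact ⟨fun ω => (ν[A|m]) ω * g ω, stronglyMeasurable_condExp.mul hg,
      hqAπ.mono fun ω e =>
        show p ω * g ω = (ν[A|m]) ω * g ω by
          have e' : (ν[A|m]) ω = p ω := e
          rw [e']⟩
  have hSπg_int : ∀ g : Ω → ℝ, StronglyMeasurable[m] g → Integrable g μ →
      Integrable (fun ω => S ω * (p ω * g ω)) μ := by
    intro g hg hgint
    refine Integrable.mono' (hgint.abs.const_mul (1 - c)) ?_ ?_
    · refine hSmeas.aestronglyMeasurable.mul ?_
      refine (((stronglyMeasurable_condExp (f := A) (μ := ν) (m := m)).mono hm).measurable.mul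
        (hg.mono hm).measurable).aestronglyMeasurable.congr ?_
      filter_upwards [hqAπ] with ω e
      rw [Pi.mul_apply, e]
    · filter_upwards [hp_bd] with ω hb
      rw [Real.norm_eq_abs, abs_mul, abs_mul, abs_of_nonneg (hS0 ω),
        abs_of_nonneg (le_trans (le_of_lt hc) hb.1)]
      calc S ω * (p ω * |g ω|) ≤ 1 * (p ω * |g ω|) := by
            refine mul_le_mul_of_nonneg_right (hS1 ω) ?_
            exact mul_nonneg (le_trans (le_of_lt hc) hb.1) (abs_nonneg _)
        _ = p ω * |g ω| := one_mul _
        _ ≤ (1 - c) * |g ω| := mul_le_mul_of_nonneg_right hb.2 (abs_nonneg _)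
  -- the two key conditional expectation identities
  have hKey1 : μ[(fun ω => S ω * (Y1 ω * A ω))|m]
      =ᵐ[μ] fun ω => p ω * g1 ω * D ω := by
    have := aux_condexp_indicator_mul hm hSmeas hS01 hE0 hY1A_int
      (hπg_m g1 stronglyMeasurable_condExp)
      (hSπg_int g1 stronglyMeasurable_condExp integrable_condExp) hprod1
    exact this
  have hKey0 : μ[(fun ω => S ω * (Y0 ω * A ω))|m]
      =ᵐ[μ] fun ω => p ω * g0 ω * D ω := by
    have := aux_condexp_indicator_mul hm hSmeas hS01 hE0 hY0A_int
      (hπg_m g0 stronglyMeasurable_condExp)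
      (hSπg_int g0 stronglyMeasurable_condExp integrable_condExp) hprod0
    exact this
  -- the weights
  set w1 : Ω → ℝ := fun ω => (1 / p ω + 0 / (1 - p ω)) *
      (ES * (1 - r ω)) / ((1 - ES) * r ω) with hw1_def
  set w0 : Ω → ℝ := fun ω => (0 / p ω + 1 / (1 - p ω)) *
      (ES * (1 - r ω)) / ((1 - ES) * r ω) with hw0_def
  have hDsm : StronglyMeasurable[m] D := stronglyMeasurable_condExp
  have hw1_m : AEStronglyMeasurable[m] w1 μ := by
    refine ⟨fun ω => (1 / (ν[A|m]) ω + 0 / (1 - (ν[A|m]) ω)) *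
        (ES * (1 - D ω)) / ((1 - ES) * D ω), ?_, ?_⟩
    · refine Measurable.stronglyMeasurable ?_
      refine Measurable.div (Measurable.mul ?_ ?_) ?_
      · exact (measurable_const.div stronglyMeasurable_condExp.measurable).add
          (measurable_const.div (measurable_const.sub stronglyMeasurable_condExp.measurable))
      · exact measurable_const.mul (measurable_const.sub hDsm.measurable)
      · exact measurable_const.mul hDsm.measurable
    · filter_upwards [hqAπ, hρ] with ω e1 e2
      have e1' : (ν[A|m]) ω = p ω := e1
      have e2' : D ω = r ω := e2
      show w1 ω = (1 / (ν[A|m]) ω + 0 / (1 - (ν[A|m]) ω)) * (ES * (1 - D ω)) / ((1 - ES) * D ω)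
      rw [e1', e2']
  have hw0_m : AEStronglyMeasurable[m] w0 μ := by
    refine ⟨fun ω => (0 / (ν[A|m]) ω + 1 / (1 - (ν[A|m]) ω)) *
        (ES * (1 - D ω)) / ((1 - ES) * D ω), ?_, ?_⟩
    · refine Measurable.stronglyMeasurable ?_
      refine Measurable.div (Measurable.mul ?_ ?_) ?_
      · exact (measurable_const.div stronglyMeasurable_condExp.measurable).add
          (measurable_const.div (measurable_const.sub stronglyMeasurable_condExp.measurable))
      · exact measurable_const.mul (measurable_const.sub hDsm.measurable)
      · exact measurable_const.mul hDsm.measurable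
    · filter_upwards [hqAπ, hρ] with ω e1 e2
      have e1' : (ν[A|m]) ω = p ω := e1
      have e2' : D ω = r ω := e2
      show w0 ω = (0 / (ν[A|m]) ω + 1 / (1 - (ν[A|m]) ω)) * (ES * (1 - D ω)) / ((1 - ES) * D ω)
      rw [e1', e2']
  -- bound on the weights
  have hCw : ∀ᵐ ω ∂μ, ‖w1 ω‖ ≤ 1 / c * ES / ((1 - ES) * c)
      ∧ ‖w0 ω‖ ≤ 1 / c * ES / ((1 - ES) * c) := by
    filter_upwards [hp_bd, hr_bd, hr_le1] with ω hb hr hr1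
    have hp0 : (0:ℝ) < p ω := lt_of_lt_of_le hc hb.1
    have h1p0 : (0:ℝ) < 1 - p ω := by linarith [hb.2]
    have hr0 : (0:ℝ) < r ω := lt_trans hc hr
    have h1r : (0:ℝ) ≤ 1 - r ω := by linarith
    have hnum : ∀ x : ℝ, 0 < x → c ≤ x →
        1 / x * (ES * (1 - r ω)) / ((1 - ES) * r ω) ≤ 1 / c * ES / ((1 - ES) * c) := by
      intro x hx0 hcx
      refine div_le_div₀ (mul_nonneg (by positivity) hS_pos.le) ?_ (by positivity) ?_
      · refine mul_le_mul (one_div_le_one_div_of_le hc hcx) ?_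
          (mul_nonneg hS_pos.le h1r) (by positivity)
        nlinarith
      · exact mul_le_mul_of_nonneg_left hr.le hES1pos.le
    constructor
    · have e : w1 ω = 1 / p ω * (ES * (1 - r ω)) / ((1 - ES) * r ω) := by
        simp [hw1_def]
      rw [Real.norm_eq_abs, e, abs_of_nonneg (by
        refine div_nonneg (mul_nonneg ?_ (mul_nonneg hS_pos.le h1r))
          (mul_nonneg hES1pos.le hr0.le)
        positivity)]
      exact hnum (p ω) hp0 hb.1
    · have e : w0 ω = 1 / (1 - p ω) * (ES * (1 - r ω)) / ((1 - ES) * r ω) := by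
        simp [hw0_def]
      rw [Real.norm_eq_abs, e, abs_of_nonneg (by
        refine div_nonneg (mul_nonneg ?_ (mul_nonneg hS_pos.le h1r))
          (mul_nonneg hES1pos.le hr0.le)
        positivity)]
      exact hnum (1 - p ω) h1p0 (by linarith [hb.2])
  have hw1_bd : ∀ᵐ ω ∂μ, ‖w1 ω‖ ≤ 1 / c * ES / ((1 - ES) * c) := hCw.mono fun ω h => h.1
  have hw0_bd : ∀ᵐ ω ∂μ, ‖w0 ω‖ ≤ 1 / c * ES / ((1 - ES) * c) := hCw.mono fun ω h => h.2
  -- generic weighted-integral machinery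
  have haesm' : ∀ {w : Ω → ℝ}, AEStronglyMeasurable[m] w μ → AEStronglyMeasurable w μ :=
    fun hw => ((hw.stronglyMeasurable_mk.mono hm).aestronglyMeasurable).congr hw.ae_eq_mk.symm
  have hwint : ∀ (w f : Ω → ℝ) (C : ℝ), AEStronglyMeasurable[m] w μ →
      (∀ᵐ ω ∂μ, ‖w ω‖ ≤ C) → Integrable f μ → Integrable (fun ω => w ω * f ω) μ := by
    intro w f C hw hbd hf
    refine Integrable.mono' (hf.abs.const_mul C)
      (((haesm' hw).mul hf.aestronglyMeasurable :
        AEStronglyMeasurable (fun ω => w ω * f ω) μ)) ?_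
    filter_upwards [hbd] with ω h1
    rw [Real.norm_eq_abs, abs_mul]
    exact mul_le_mul_of_nonneg_right (by rwa [Real.norm_eq_abs] at h1) (abs_nonneg _)
  have hwstep : ∀ (w f : Ω → ℝ) (C : ℝ), AEStronglyMeasurable[m] w μ →
      (∀ᵐ ω ∂μ, ‖w ω‖ ≤ C) → Integrable f μ →
      ∫ ω, w ω * f ω ∂μ = ∫ ω, w ω * (μ[f|m]) ω ∂μ := by
    intro w f C hw hbd hf
    have h1 : μ[w * f|m] =ᵐ[μ] w * μ[f|m] :=
      condExp_stronglyMeasurable_mul_of_bound₀ hm hw hf C hbd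
    have h2 : ∫ ω, (μ[w * f|m]) ω ∂μ = ∫ ω, (w * f) ω ∂μ := integral_condExp hm
    calc ∫ ω, w ω * f ω ∂μ = ∫ ω, (μ[w * f|m]) ω ∂μ := h2.symm
      _ = ∫ ω, w ω * (μ[f|m]) ω ∂μ := integral_congr_ae (h1.mono fun ω e => e)
  -- first numerator piece
  have hnum1 : ∫ ω, w1 ω * (S ω * (Y1 ω * A ω)) ∂μ
      = ES / (1 - ES) * ∫ ω, (1 - r ω) * g1 ω ∂μ := by
    rw [hwstep w1 _ (1 / c * ES / ((1 - ES) * c)) hw1_m hw1_bd hSY1A_int,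
      ← integral_const_mul]
    refine integral_congr_ae ?_
    filter_upwards [hKey1, hρ, hp_bd, hr_bd] with ω e1 e2 hb hr
    have e1' : (μ[(fun ω => S ω * (Y1 ω * A ω))|m]) ω = p ω * g1 ω * D ω := e1
    have e2' : D ω = r ω := e2
    rw [e1', e2']
    have hp0 : p ω ≠ 0 := ne_of_gt (lt_of_lt_of_le hc hb.1)
    have hr0 : r ω ≠ 0 := ne_of_gt (lt_trans hc hr)
    have e3 : w1 ω = 1 / p ω * (ES * (1 - r ω)) / ((1 - ES) * r ω) := by simp [hw1_def]
    rw [e3]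
    field_simp
  -- second numerator piece
  have hsub0 : μ[(fun ω => S ω * Y0 ω - S ω * (Y0 ω * A ω))|m]
      =ᵐ[μ] fun ω => g0 ω * D ω - p ω * g0 ω * D ω := by
    have h0 : μ[(fun ω => S ω * Y0 ω) - (fun ω => S ω * (Y0 ω * A ω))|m]
        =ᵐ[μ] μ[(fun ω => S ω * Y0 ω)|m] - μ[(fun ω => S ω * (Y0 ω * A ω))|m] :=
      condExp_sub hSY0_int hSY0A_int m
    refine Filter.EventuallyEq.trans ?_ (h0.trans ?_)
    · exact condExp_congr_ae (ae_of_all _ fun ω => rfl)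
    · filter_upwards [hexch0', hKey0] with ω eA eB
      have eA' : (μ[(fun ω => S ω * Y0 ω)|m]) ω = g0 ω * D ω := eA
      have eB' : (μ[(fun ω => S ω * (Y0 ω * A ω))|m]) ω = p ω * g0 ω * D ω := eB
      show (μ[(fun ω => S ω * Y0 ω)|m] - μ[(fun ω => S ω * (Y0 ω * A ω))|m]) ω
        = g0 ω * D ω - p ω * g0 ω * D ω
      rw [Pi.sub_apply, eA', eB']
  have hnum0 : ∫ ω, w0 ω * (S ω * Y0 ω - S ω * (Y0 ω * A ω)) ∂μ
      = ES / (1 - ES) * ∫ ω, (1 - r ω) * g0 ω ∂μ := by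
    rw [hwstep w0 (fun ω => S ω * Y0 ω - S ω * (Y0 ω * A ω)) (1 / c * ES / ((1 - ES) * c))
        hw0_m hw0_bd (hIcast (hSY0_int.sub hSY0A_int) fun _ => rfl),
      ← integral_const_mul]
    refine integral_congr_ae ?_
    filter_upwards [hsub0, hρ, hp_bd, hr_bd] with ω e1 e2 hb hr
    have e1' : (μ[(fun ω => S ω * Y0 ω - S ω * (Y0 ω * A ω))|m]) ω
      = g0 ω * D ω - p ω * g0 ω * D ω := e1
    have e2' : D ω = r ω := e2
    rw [e1', e2']
    have h1p0 : (1:ℝ) - p ω ≠ 0 := by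
      have : p ω ≤ 1 - c := hb.2
      intro h; nlinarith
    have hr0 : r ω ≠ 0 := ne_of_gt (lt_trans hc hr)
    have e3 : w0 ω = 1 / (1 - p ω) * (ES * (1 - r ω)) / ((1 - ES) * r ω) := by simp [hw0_def]
    rw [e3]
    field_simp
  -- pointwise identity for the big integrand
  have hint_eq : (fun ω => S ω *
        (A ω * ((1 / p ω + 0 / (1 - p ω)) * (ES * (1 - r ω)) / ((1 - ES) * r ω))
          * (if A ω = 1 then Y1 ω else Y0 ω)
        - (1 - A ω) * ((0 / p ω + 1 / (1 - p ω)) * (ES * (1 - r ω)) / ((1 - ES) * r ω))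
          * (if A ω = 1 then Y1 ω else Y0 ω)))
      = fun ω => w1 ω * (S ω * (Y1 ω * A ω))
        - w0 ω * (S ω * Y0 ω - S ω * (Y0 ω * A ω)) := by
    funext ω
    simp only [hw1_def, hw0_def]
    rcases hA01 ω with h | h
    · rw [h, if_neg (by norm_num : (0:ℝ) ≠ 1)]; ring
    · rw [h, if_pos rfl]; ring
  -- the integrals of the conditional means
  have hr_m : AEStronglyMeasurable[m] (fun ω => r ω) μ := ⟨D, hDsm, hρ.symm⟩
  have hr_bd1 : ∀ᵐ ω ∂μ, ‖r ω‖ ≤ 1 := by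
    filter_upwards [hr_bd, hr_le1] with ω h1 h2
    rw [Real.norm_eq_abs, abs_of_nonneg (le_of_lt (lt_trans hc h1))]; exact h2
  have hrg1_int : Integrable (fun ω => r ω * g1 ω) μ :=
    hwint _ _ 1 hr_m hr_bd1 integrable_condExp
  have hrg0_int : Integrable (fun ω => r ω * g0 ω) μ :=
    hwint _ _ 1 hr_m hr_bd1 integrable_condExp
  have hSY1_val : ∫ ω, S ω * Y1 ω ∂μ = ∫ ω, r ω * g1 ω ∂μ := by
    refine ((integral_condExp hm (f := fun ω => S ω * Y1 ω)).symm).trans ?_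
    refine integral_congr_ae ?_
    filter_upwards [hexch1', hρ] with ω e1 e2
    have e1' : (μ[(fun ω => S ω * Y1 ω)|m]) ω = g1 ω * D ω := e1
    have e2' : D ω = r ω := e2
    rw [e1', e2', mul_comm]
  have hSY0_val : ∫ ω, S ω * Y0 ω ∂μ = ∫ ω, r ω * g0 ω ∂μ := by
    refine ((integral_condExp hm (f := fun ω => S ω * Y0 ω)).symm).trans ?_
    refine integral_congr_ae ?_
    filter_upwards [hexch0', hρ] with ω e1 e2
    have e1' : (μ[(fun ω => S ω * Y0 ω)|m]) ω = g0 ω * D ω := e1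
    have e2' : D ω = r ω := e2
    rw [e1', e2', mul_comm]
  have hY1_val : ∫ ω, Y1 ω ∂μ = ∫ ω, g1 ω ∂μ := (integral_condExp hm).symm
  have hY0_val : ∫ ω, Y0 ω ∂μ = ∫ ω, g0 ω ∂μ := (integral_condExp hm).symm
  have hT1 : ∫ ω, (1 - r ω) * g1 ω ∂μ = ∫ ω, g1 ω ∂μ - ∫ ω, r ω * g1 ω ∂μ := by
    rw [← integral_sub integrable_condExp hrg1_int]
    refine integral_congr_ae (ae_of_all _ fun ω => ?_)
    ring
  have hT0 : ∫ ω, (1 - r ω) * g0 ω ∂μ = ∫ ω, g0 ω ∂μ - ∫ ω, r ω * g0 ω ∂μ := by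
    rw [← integral_sub integrable_condExp hrg0_int]
    refine integral_congr_ae (ae_of_all _ fun ω => ?_)
    ring
  -- left-hand side numerator
  have hNL : ∫ ω, (1 - S ω) * (Y1 ω - Y0 ω) ∂μ
      = (∫ ω, (1 - r ω) * g1 ω ∂μ) - ∫ ω, (1 - r ω) * g0 ω ∂μ := by
    have e : (fun ω => (1 - S ω) * (Y1 ω - Y0 ω))
        = fun ω => (Y1 ω - S ω * Y1 ω) - (Y0 ω - S ω * Y0 ω) := funext fun ω => by ring
    rw [e, integral_sub
        (hIcast (hY1int.sub hSY1_int) (fun _ => rfl) :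
          Integrable (fun ω => Y1 ω - S ω * Y1 ω) μ)
        (hIcast (hY0int.sub hSY0_int) (fun _ => rfl) :
          Integrable (fun ω => Y0 ω - S ω * Y0 ω) μ),
      integral_sub hY1int hSY1_int, integral_sub hY0int hSY0_int,
      hSY1_val, hSY0_val, hY1_val, hY0_val, hT1, hT0]
  -- denominator
  have hden : ∫ ω, (1 - S ω) ∂μ = 1 - ES := by
    rw [integral_sub (integrable_const 1) hSint]
    simp [hES_def]
  -- right-hand side numerator
  have hNR : (∫ ω, S ω *
        (A ω * ((1 / p ω + 0 / (1 - p ω)) * (ES * (1 - r ω)) / ((1 - ES) * r ω))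
          * (if A ω = 1 then Y1 ω else Y0 ω)
        - (1 - A ω) * ((0 / p ω + 1 / (1 - p ω)) * (ES * (1 - r ω)) / ((1 - ES) * r ω))
          * (if A ω = 1 then Y1 ω else Y0 ω)) ∂μ)
      = ES / (1 - ES) * (∫ ω, (1 - r ω) * g1 ω ∂μ)
        - ES / (1 - ES) * ∫ ω, (1 - r ω) * g0 ω ∂μ := by
    rw [hint_eq, integral_sub
      (hwint w1 _ (1 / c * ES / ((1 - ES) * c)) hw1_m hw1_bd hSY1A_int)
      (hwint w0 _ (1 / c * ES / ((1 - ES) * c)) hw0_m hw0_bd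
        (hIcast (hSY0_int.sub hSY0A_int) (fun _ => rfl) :
          Integrable (fun ω => S ω * Y0 ω - S ω * (Y0 ω * A ω)) μ)),
      hnum1, hnum0]
  rw [hden, hNL, hNR]
  field_simp

/-- Under unconfoundedness, positivity of the propensity score,
mean exchangeability and positivity of the participation probability, the target
ATE `τ* = E[Y(1) − Y(0) | S = 0]` equals the weighted source-population estimand
`E[A w*(1,X) Y − (1−A) w*(0,X) Y | S = 1]`. -/
theorem target_ATE_weighting_representation
    {Ω 𝓧 : Type*} [MeasurableSpace Ω] [StandardBorelSpace Ω] [MeasurableSpace 𝓧]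
    (μ : Measure Ω) [IsProbabilityMeasure μ]
    (X : Ω → 𝓧) (hX : Measurable X)
    (S A Y0 Y1 : Ω → ℝ)
    (hSmeas : Measurable S) (hAmeas : Measurable A)
    (hY0meas : Measurable Y0) (hY1meas : Measurable Y1)
    (hS01 : ∀ ω, S ω = 0 ∨ S ω = 1) (hA01 : ∀ ω, A ω = 0 ∨ A ω = 1)
    -- finite second moments of the potential outcomes
    (hY0L2 : Integrable (fun ω => (Y0 ω) ^ 2) μ)
    (hY1L2 : Integrable (fun ω => (Y1 ω) ^ 2) μ)
    (π ρ : 𝓧 → ℝ) (c : ℝ) (hc : 0 < c)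
    -- Assumption 2: positivity of the propensity score
    (hπ_bd : ∀ᵐ ω ∂μ, c ≤ π (X ω) ∧ π (X ω) ≤ 1 - c)
    -- Assumption 4: positivity of the participation probability
    (hρ_bd : ∀ᵐ ω ∂μ, c < ρ (X ω))
    -- 0 < P(S=1) < 1
    (hS_pos : 0 < ∫ ω, S ω ∂μ) (hS_lt : ∫ ω, S ω ∂μ < 1)
    -- ρ is the participation probability: E[S | X] = ρ(X)
    (hρ : μ[S | MeasurableSpace.comap X ‹MeasurableSpace 𝓧›] =ᵐ[μ] fun ω => ρ (X ω))
    -- π is the propensity score P(A=1 | X, S=1): E[S·A | X] = ρ(X)·π(X)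
    (hπ : μ[(fun ω => S ω * A ω) | MeasurableSpace.comap X ‹MeasurableSpace 𝓧›]
        =ᵐ[μ] fun ω => ρ (X ω) * π (X ω))
    (hm : MeasurableSpace.comap X ‹MeasurableSpace 𝓧› ≤ ‹MeasurableSpace Ω›)
    [IsFiniteMeasure (μ[|{ω | S ω = 1}])]
    -- Assumption 1: unconfoundedness (Y(0),Y(1)) ⫫ A | X, S=1
    (hunconf : CondIndepFun (MeasurableSpace.comap X ‹MeasurableSpace 𝓧›) hm
        (fun ω => (Y0 ω, Y1 ω)) A (μ[|{ω | S ω = 1}]))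
    -- Assumption 3: mean exchangeability E[Y(a) | X, S] = E[Y(a) | X], a ∈ {0,1}
    (hexch0 : μ[Y0 | MeasurableSpace.comap (fun ω => (X ω, S ω)) inferInstance]
        =ᵐ[μ] μ[Y0 | MeasurableSpace.comap X ‹MeasurableSpace 𝓧›])
    (hexch1 : μ[Y1 | MeasurableSpace.comap (fun ω => (X ω, S ω)) inferInstance]
        =ᵐ[μ] μ[Y1 | MeasurableSpace.comap X ‹MeasurableSpace 𝓧›]) :
    -- τ* = E[Y(1) − Y(0) | S=0] equals E[A w*(1,X) Y − (1−A) w*(0,X) Y | S=1]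
    (∫ ω, (1 - S ω) * (Y1 ω - Y0 ω) ∂μ) / (∫ ω, (1 - S ω) ∂μ)
      = (∫ ω, S ω *
            (A ω * ((1 / π (X ω) + 0 / (1 - π (X ω))) *
                ((∫ ω', S ω' ∂μ) * (1 - ρ (X ω))) / ((1 - ∫ ω', S ω' ∂μ) * ρ (X ω)))
              * (if A ω = 1 then Y1 ω else Y0 ω)
            - (1 - A ω) * ((0 / π (X ω) + 1 / (1 - π (X ω))) *
                ((∫ ω', S ω' ∂μ) * (1 - ρ (X ω))) / ((1 - ∫ ω', S ω' ∂μ) * ρ (X ω)))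
              * (if A ω = 1 then Y1 ω else Y0 ω)) ∂μ) / (∫ ω, S ω ∂μ) := by
  have hm'' : MeasurableSpace.comap (fun ω => (X ω, S ω)) inferInstance
      ≤ ‹MeasurableSpace Ω› := (hX.prodMk hSmeas).comap_le
  have hmm' : MeasurableSpace.comap X ‹MeasurableSpace 𝓧›
      ≤ MeasurableSpace.comap (fun ω => (X ω, S ω)) inferInstance :=
    calc MeasurableSpace.comap X ‹MeasurableSpace 𝓧›
        = MeasurableSpace.comap (fun ω => (X ω, S ω))
            (MeasurableSpace.comap Prod.fst ‹MeasurableSpace 𝓧›) := by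
          rw [MeasurableSpace.comap_comp]; exact rfl
      _ ≤ _ := MeasurableSpace.comap_mono measurable_fst.comap_le
  have hSm' : StronglyMeasurable[MeasurableSpace.comap (fun ω => (X ω, S ω)) inferInstance] S := by
    have h1 : Measurable[MeasurableSpace.comap (fun ω => (X ω, S ω)) inferInstance]
        (fun ω => (X ω, S ω)) := Measurable.of_comap_le le_rfl
    exact (measurable_snd.comp h1 :
      Measurable[MeasurableSpace.comap (fun ω => (X ω, S ω)) inferInstance] S).stronglyMeasurable
  have habs_le : ∀ y : ℝ, ‖y‖ ≤ 1 + y ^ 2 := fun y => by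
    rw [Real.norm_eq_abs]
    nlinarith [sq_nonneg (|y| - 1), sq_abs y, abs_nonneg y]
  have hY1int : Integrable Y1 μ :=
    Integrable.mono' ((integrable_const 1).add hY1L2) hY1meas.aestronglyMeasurable
      (ae_of_all _ fun ω => habs_le _)
  have hY0int : Integrable Y0 μ :=
    Integrable.mono' ((integrable_const 1).add hY0L2) hY0meas.aestronglyMeasurable
      (ae_of_all _ fun ω => habs_le _)
  exact main_aux hm hmm' hm'' μ S A Y0 Y1 hSmeas hAmeas hY0meas hY1meas hS01 hA01
    hY0int hY1int (fun ω => π (X ω)) (fun ω => ρ (X ω)) c hc hπ_bd hρ_bd hS_pos hS_lt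
    hρ hπ hSm' hunconf hexch0 hexch1
end

section
/- The solution of the primal entropy balancing problem min_{w ⪰ 0} Σ_{i∈𝒮} w_i log w_i subject to (1/n_s) Σ_{i∈𝒮₁} w_i h_k(X_i) = h̄_{k,𝒯} for k=0,...,K_h, (1/n_s) Σ_{i∈𝒮₀} w_i h_k(X_i) = h̄_{k,𝒯} for k=0,...,K_h, and (1/n_s) Σ_{i∈𝒮₁} w_i g_k(X_i) = (1/n_s) Σ_{i∈𝒮₀} w_i g_k(X_i) for k=1,...,K_g, when it exists, takes the exponential tilting form ŵ_i = exp(λ̂₁ᵀH(X_i) + γ̂ᵀG(X_i)) for i ∈ 𝒮₁ and ŵ_i = exp(λ̂₀ᵀH(X_i) − γ̂ᵀG(X_i)) for i ∈ 𝒮₀, where (λ̂₁, λ̂₀, γ̂) solves the dual problem min (1/n_s) Σ_{i∈𝒮₁} exp(λ₁ᵀH(X_i) + γᵀG(X_i)) + (1/n_s) Σ_{i∈𝒮₀} exp(λ₀ᵀH(X_i) − γᵀG(X_i)) − (λ₁+λ₀)ᵀH̄_𝒯. -/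
open Finset


lemma exp_tangent_line (a b : ℝ) : Real.exp b + Real.exp b * (a - b) ≤ Real.exp a := by
  have h := Real.add_one_le_exp (a - b)
  calc Real.exp b + Real.exp b * (a-b) = Real.exp b * ((a-b)+1) := by ring
  _ ≤ Real.exp b * Real.exp (a-b) := mul_le_mul_of_nonneg_left h (Real.exp_nonneg b)
  _ = Real.exp a := by rw [← Real.exp_add]; ring_nf

lemma sum_lincomb {ι κ : Type*} [Fintype κ] (T : Finset ι) (w : ι → ℝ) (d : κ → ℝ)
    (F : ι → κ → ℝ) :
    ∑ i ∈ T, w i * (∑ k, d k * F i k) = ∑ k, d k * ∑ i ∈ T, w i * F i k := by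
  calc ∑ i ∈ T, w i * (∑ k, d k * F i k) = ∑ i ∈ T, ∑ k, d k * (w i * F i k) := by
        refine Finset.sum_congr rfl fun i _ => ?_
        rw [Finset.mul_sum]
        exact Finset.sum_congr rfl fun k _ => by ring
    _ = ∑ k, ∑ i ∈ T, d k * (w i * F i k) := Finset.sum_comm
    _ = ∑ k, d k * ∑ i ∈ T, w i * F i k :=
        Finset.sum_congr rfl fun k _ => (Finset.mul_sum _ _ _).symm

lemma group_bound {ι : Type*} (T : Finset ι) (w : ι → ℝ) (a a' : ι → ℝ)
    (hw : ∀ i ∈ T, w i = Real.exp (a i)) (c : ℝ) (hc : 0 ≤ c) :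
    c * ∑ i ∈ T, w i * (a' i - a i)
      ≤ c * ∑ i ∈ T, Real.exp (a' i) - c * ∑ i ∈ T, Real.exp (a i) := by
  rw [← mul_sub, ← Finset.sum_sub_distrib]
  apply mul_le_mul_of_nonneg_left _ hc
  apply Finset.sum_le_sum
  intro i hi
  rw [hw i hi]
  have := exp_tangent_line (a' i) (a i)
  linarith

/-- the solution of the primal entropy balancing problem (7), when it
exists (with strictly positive weights), takes the exponential tilting form given by
a solution of the dual problem (8). -/
theorem entropy_balancing_primal_solution_form
    {ι 𝓧 : Type*} [DecidableEq ι] (S1 S0 : Finset ι) (hdisj : Disjoint S1 S0)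
    (X : ι → 𝓧) (Kh Kg : ℕ)
    (H : 𝓧 → Fin (Kh + 1) → ℝ) (G : 𝓧 → Fin Kg → ℝ)
    (hH0 : ∀ x, H x 0 = 1)
    (Hbar : Fin (Kh + 1) → ℝ) (hHbar0 : Hbar 0 = 1)
    (ns : ℝ) (hns : ns = ((S1.card + S0.card : ℕ) : ℝ))
    (w : ι → ℝ)
    -- the solution exists: w has strictly positive weights,
    (hwpos : ∀ i ∈ S1 ∪ S0, 0 < w i)
    -- w is feasible,
    (hcon1 : ∀ k, (1 / ns) * ∑ i ∈ S1, w i * H (X i) k = Hbar k)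
    (hcon0 : ∀ k, (1 / ns) * ∑ i ∈ S0, w i * H (X i) k = Hbar k)
    (hconG : ∀ k, (1 / ns) * ∑ i ∈ S1, w i * G (X i) k
                = (1 / ns) * ∑ i ∈ S0, w i * G (X i) k)
    -- and w minimizes the entropy objective over all feasible nonnegative weights:
    (hopt : ∀ v : ι → ℝ, (∀ i ∈ S1 ∪ S0, 0 ≤ v i) →
        (∀ k, (1 / ns) * ∑ i ∈ S1, v i * H (X i) k = Hbar k) →
        (∀ k, (1 / ns) * ∑ i ∈ S0, v i * H (X i) k = Hbar k) →
        (∀ k, (1 / ns) * ∑ i ∈ S1, v i * G (X i) k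
            = (1 / ns) * ∑ i ∈ S0, v i * G (X i) k) →
        ∑ i ∈ S1 ∪ S0, w i * Real.log (w i) ≤ ∑ i ∈ S1 ∪ S0, v i * Real.log (v i)) :
    -- then w takes the exponential tilting form, with dual parameters solving the dual:
    ∃ (l1 l0 : Fin (Kh + 1) → ℝ) (γ : Fin Kg → ℝ),
      (∀ i ∈ S1, w i = Real.exp ((∑ k, l1 k * H (X i) k) + ∑ k, γ k * G (X i) k)) ∧
      (∀ i ∈ S0, w i = Real.exp ((∑ k, l0 k * H (X i) k) - ∑ k, γ k * G (X i) k)) ∧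
      (∀ (l1' l0' : Fin (Kh + 1) → ℝ) (γ' : Fin Kg → ℝ),
        ((1 / ns) * ∑ i ∈ S1, Real.exp ((∑ k, l1 k * H (X i) k) + ∑ k, γ k * G (X i) k))
          + ((1 / ns) * ∑ i ∈ S0, Real.exp ((∑ k, l0 k * H (X i) k) - ∑ k, γ k * G (X i) k))
          - ∑ k, (l1 k + l0 k) * Hbar k
        ≤ ((1 / ns) * ∑ i ∈ S1, Real.exp ((∑ k, l1' k * H (X i) k) + ∑ k, γ' k * G (X i) k))
          + ((1 / ns) * ∑ i ∈ S0, Real.exp ((∑ k, l0' k * H (X i) k) - ∑ k, γ' k * G (X i) k))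
          - ∑ k, (l1' k + l0' k) * Hbar k) := by
  classical
  -- nonemptiness and ns > 0
  have hS1ne : S1.Nonempty := by
    by_contra h
    rw [Finset.not_nonempty_iff_eq_empty] at h
    have := hcon1 0
    rw [h] at this
    simp [hHbar0] at this
  have hS0ne : S0.Nonempty := by
    by_contra h
    rw [Finset.not_nonempty_iff_eq_empty] at h
    have := hcon0 0
    rw [h] at this
    simp [hHbar0] at this
  have hnspos : 0 < ns := by
    rw [hns]
    exact_mod_cast Nat.add_pos_left (Finset.card_pos.mpr hS1ne) _
  -- STEP A: first-order condition
  have key : ∀ z : ι → ℝ,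
      (∀ k, ∑ i ∈ S1, z i * H (X i) k = 0) →
      (∀ k, ∑ i ∈ S0, z i * H (X i) k = 0) →
      (∀ k, ∑ i ∈ S1, z i * G (X i) k = ∑ i ∈ S0, z i * G (X i) k) →
      ∑ i ∈ S1 ∪ S0, z i * Real.log (w i) = 0 := by
    intro z hz1 hz0 hzG
    obtain ⟨i0, hi0⟩ := hS1ne
    have hune : (S1 ∪ S0).Nonempty := ⟨i0, Finset.mem_union_left _ hi0⟩
    set δ := (S1 ∪ S0).inf' hune (fun i => w i / (|z i| + 1)) with hδ
    have hδpos : 0 < δ := by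
      rw [hδ, Finset.lt_inf'_iff]
      intro i hi
      have := hwpos i hi
      positivity
    have hpos : ∀ t : ℝ, |t| < δ → ∀ i ∈ S1 ∪ S0, 0 < w i + t * z i := by
      intro t ht i hi
      have h1 : |t * z i| < w i := by
        have h2 : δ ≤ w i / (|z i| + 1) := Finset.inf'_le _ hi
        have h3 : |t| * (|z i| + 1) < (w i / (|z i| + 1)) * (|z i| + 1) := by
          apply mul_lt_mul_of_pos_right (lt_of_lt_of_le ht h2)
          positivity
        rw [div_mul_cancel₀] at h3
        · calc |t * z i| = |t| * |z i| := abs_mul t (z i)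
          _ ≤ |t| * (|z i| + 1) := by nlinarith [abs_nonneg t, abs_nonneg (z i)]
          _ < w i := h3
        · positivity
      have := neg_abs_le (t * z i)
      linarith [abs_lt.mp h1]
    -- feasibility of perturbation
    have hfeas : ∀ t : ℝ, |t| < δ →
        ∑ i ∈ S1 ∪ S0, w i * Real.log (w i)
          ≤ ∑ i ∈ S1 ∪ S0, (w i + t * z i) * Real.log (w i + t * z i) := by
      intro t ht
      apply hopt
      · intro i hi; exact (hpos t ht i hi).le
      · intro k
        have : ∑ i ∈ S1, (w i + t * z i) * H (X i) k
            = ∑ i ∈ S1, w i * H (X i) k + t * ∑ i ∈ S1, z i * H (X i) k := by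
          rw [Finset.mul_sum, ← Finset.sum_add_distrib]
          exact Finset.sum_congr rfl fun i _ => by ring
        rw [this, hz1 k, mul_zero, add_zero]
        exact hcon1 k
      · intro k
        have : ∑ i ∈ S0, (w i + t * z i) * H (X i) k
            = ∑ i ∈ S0, w i * H (X i) k + t * ∑ i ∈ S0, z i * H (X i) k := by
          rw [Finset.mul_sum, ← Finset.sum_add_distrib]
          exact Finset.sum_congr rfl fun i _ => by ring
        rw [this, hz0 k, mul_zero, add_zero]
        exact hcon0 k
      · intro k
        have e1 : ∑ i ∈ S1, (w i + t * z i) * G (X i) k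
            = ∑ i ∈ S1, w i * G (X i) k + t * ∑ i ∈ S1, z i * G (X i) k := by
          rw [Finset.mul_sum, ← Finset.sum_add_distrib]
          exact Finset.sum_congr rfl fun i _ => by ring
        have e0 : ∑ i ∈ S0, (w i + t * z i) * G (X i) k
            = ∑ i ∈ S0, w i * G (X i) k + t * ∑ i ∈ S0, z i * G (X i) k := by
          rw [Finset.mul_sum, ← Finset.sum_add_distrib]
          exact Finset.sum_congr rfl fun i _ => by ring
        rw [e1, e0, hzG k, mul_add, mul_add, hconG k]
    -- local minimum of f at 0
    set f : ℝ → ℝ := fun t => ∑ i ∈ S1 ∪ S0, (w i + t * z i) * Real.log (w i + t * z i)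
      with hf
    have hlm : IsLocalMin f 0 := by
      have hmem : Set.Ioo (-δ) δ ∈ nhds (0:ℝ) := Ioo_mem_nhds (by linarith) hδpos
      filter_upwards [hmem] with t ht
      have h0 : f 0 = ∑ i ∈ S1 ∪ S0, w i * Real.log (w i) := by
        simp [hf]
      rw [h0]
      exact hfeas t (abs_lt.mpr ⟨ht.1, ht.2⟩)
    have hder : HasDerivAt f (∑ i ∈ S1 ∪ S0, z i * (Real.log (w i) + 1)) 0 := by
      apply HasDerivAt.fun_sum
      intro i hi
      have hwne : w i ≠ 0 := (hwpos i hi).ne'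
      have h1 : HasDerivAt (fun t : ℝ => w i + t * z i) (z i) 0 := by
        simpa using ((hasDerivAt_id (0:ℝ)).mul_const (z i)).const_add (w i)
      have h2 := h1.log (by simpa using hwne)
      have h3 := h1.fun_mul h2
      refine h3.congr_deriv ?_
      simp only [zero_mul, add_zero]
      field_simp
    have hzero : ∑ i ∈ S1 ∪ S0, z i * (Real.log (w i) + 1) = 0 :=
      hlm.hasDerivAt_eq_zero hder
    have hsum1 : ∑ i ∈ S1, z i = 0 := by
      have := hz1 0
      simpa [hH0] using this
    have hsum0 : ∑ i ∈ S0, z i = 0 := by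
      have := hz0 0
      simpa [hH0] using this
    have hsumz : ∑ i ∈ S1 ∪ S0, z i = 0 := by
      rw [Finset.sum_union hdisj, hsum1, hsum0, add_zero]
    have : ∑ i ∈ S1 ∪ S0, z i * Real.log (w i)
        = ∑ i ∈ S1 ∪ S0, z i * (Real.log (w i) + 1) - ∑ i ∈ S1 ∪ S0, z i := by
      rw [← Finset.sum_sub_distrib]
      exact Finset.sum_congr rfl fun i _ => by ring
    rw [this, hzero, hsumz, sub_zero]
  -- STEP B: representation of log w
  obtain ⟨l1, l0, γ, hw1, hw0⟩ :
      ∃ (l1 l0 : Fin (Kh + 1) → ℝ) (γ : Fin Kg → ℝ),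
        (∀ i ∈ S1, w i = Real.exp ((∑ k, l1 k * H (X i) k) + ∑ k, γ k * G (X i) k)) ∧
        (∀ i ∈ S0, w i = Real.exp ((∑ k, l0 k * H (X i) k) - ∑ k, γ k * G (X i) k)) := by
    classical
    set u := S1 ∪ S0 with hu
    have hnS0 : ∀ i ∈ S1, i ∉ S0 := fun i hi => Finset.disjoint_left.mp hdisj hi
    have hnS1 : ∀ i ∈ S0, i ∉ S1 := fun i hi => Finset.disjoint_right.mp hdisj hi
    let V := EuclideanSpace ℝ ↥u
    let c : (Fin (Kh+1) ⊕ (Fin (Kh+1) ⊕ Fin Kg)) → V := fun j => WithLp.toLp 2 fun i => match j with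
      | Sum.inl k => if (i:ι) ∈ S1 then H (X i) k else 0
      | Sum.inr (Sum.inl k) => if (i:ι) ∈ S1 then 0 else H (X i) k
      | Sum.inr (Sum.inr k) => if (i:ι) ∈ S1 then G (X i) k else -G (X i) k
    let φ : V := WithLp.toLp 2 fun i => Real.log (w i)
    have hsplit : ∀ (F : ι → ℝ), ∑ i : ↥u, F ↑i = ∑ i ∈ S1, F i + ∑ i ∈ S0, F i := by
      intro F
      rw [Finset.sum_coe_sort u F, hu, Finset.sum_union hdisj]
    have hφmem : φ ∈ Submodule.span ℝ (Set.range c) := by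
      rw [← Submodule.orthogonal_orthogonal (Submodule.span ℝ (Set.range c)),
        Submodule.mem_orthogonal]
      intro z hz
      have hzc : ∀ j, ∑ i : ↥u, z i * c j i = 0 := by
        intro j
        have h1 : (inner ℝ (c j) z : ℝ) = 0 :=
          hz (c j) (Submodule.subset_span (Set.mem_range_self j))
        rw [PiLp.inner_apply] at h1
        simp only [RCLike.inner_apply, conj_trivial] at h1
        exact h1
      set zext : ι → ℝ := fun i => if h : i ∈ u then z ⟨i, h⟩ else 0 with hzext
      have hze : ∀ i : ↥u, zext ↑i = z i := fun i => dif_pos i.2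
      have hsum2 : ∀ A B : ι → ℝ,
          (∑ i : ↥u, z i * (if (i:ι) ∈ S1 then A ↑i else B ↑i))
            = ∑ i ∈ S1, zext i * A i + ∑ i ∈ S0, zext i * B i := by
        intro A B
        calc (∑ i : ↥u, z i * (if (i:ι) ∈ S1 then A ↑i else B ↑i))
            = ∑ i : ↥u, zext ↑i * (if (↑i:ι) ∈ S1 then A ↑i else B ↑i) :=
              Finset.sum_congr rfl fun i _ => by rw [hze]
          _ = ∑ i ∈ S1, (zext i * if i ∈ S1 then A i else B i)
              + ∑ i ∈ S0, (zext i * if i ∈ S1 then A i else B i) :=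
              hsplit (fun i => zext i * if i ∈ S1 then A i else B i)
          _ = ∑ i ∈ S1, zext i * A i + ∑ i ∈ S0, zext i * B i := by
              congr 1
              · exact Finset.sum_congr rfl fun i hi => by rw [if_pos hi]
              · exact Finset.sum_congr rfl fun i hi => by rw [if_neg (hnS1 i hi)]
      have e1 : ∀ k, ∑ i ∈ S1, zext i * H (X i) k = 0 := by
        intro k
        have h : (∑ i : ↥u, z i * (if (i:ι) ∈ S1 then H (X i) k else 0)) = 0 :=
          hzc (Sum.inl k)
        rw [hsum2 (fun i => H (X i) k) (fun _ => 0)] at h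
        simpa using h
      have e0 : ∀ k, ∑ i ∈ S0, zext i * H (X i) k = 0 := by
        intro k
        have h : (∑ i : ↥u, z i * (if (i:ι) ∈ S1 then 0 else H (X i) k)) = 0 :=
          hzc (Sum.inr (Sum.inl k))
        rw [hsum2 (fun _ => 0) (fun i => H (X i) k)] at h
        simpa using h
      have eG : ∀ k, ∑ i ∈ S1, zext i * G (X i) k = ∑ i ∈ S0, zext i * G (X i) k := by
        intro k
        have h : (∑ i : ↥u, z i * (if (i:ι) ∈ S1 then G (X i) k else -G (X i) k)) = 0 :=
          hzc (Sum.inr (Sum.inr k))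
        rw [hsum2 (fun i => G (X i) k) (fun i => -G (X i) k)] at h
        have h2 : ∑ i ∈ S0, zext i * -G (X i) k = -∑ i ∈ S0, zext i * G (X i) k := by
          rw [← Finset.sum_neg_distrib]
          exact Finset.sum_congr rfl fun i _ => by ring
        rw [h2] at h
        linarith
      have hk := key zext e1 e0 eG
      show (inner ℝ z φ : ℝ) = 0
      calc (inner ℝ z φ : ℝ) = ∑ i : ↥u, z i * Real.log (w ↑i) := by
            rw [PiLp.inner_apply]; exact Finset.sum_congr rfl fun i _ => mul_comm _ _
        _ = ∑ i : ↥u, zext ↑i * Real.log (w ↑i) :=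
            Finset.sum_congr rfl fun i _ => by rw [hze]
        _ = ∑ i ∈ S1, zext i * Real.log (w i) + ∑ i ∈ S0, zext i * Real.log (w i) :=
            hsplit (fun i => zext i * Real.log (w i))
        _ = ∑ i ∈ S1 ∪ S0, zext i * Real.log (w i) := (Finset.sum_union hdisj).symm
        _ = 0 := hk
    rw [Submodule.mem_span_range_iff_exists_fun] at hφmem
    obtain ⟨μ, hμ⟩ := hφmem
    refine ⟨fun k => μ (Sum.inl k), fun k => μ (Sum.inr (Sum.inl k)),
      fun k => μ (Sum.inr (Sum.inr k)), ?_, ?_⟩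
    · intro i hi
      have hiu : i ∈ u := Finset.mem_union_left _ hi
      have happ : (∑ j, μ j • c j) (⟨i, hiu⟩ : ↥u) = φ ⟨i, hiu⟩ := by rw [hμ]
      rw [WithLp.ofLp_sum, Finset.sum_apply] at happ
      have h2 : Real.log (w i) = ∑ j, μ j * c j ⟨i, hiu⟩ := by
        have h3 : φ (⟨i, hiu⟩ : ↥u) = ∑ j, μ j * c j ⟨i, hiu⟩ := by
          rw [← happ]; exact Finset.sum_congr rfl fun j _ => rfl
        exact h3
      rw [Fintype.sum_sum_type, Fintype.sum_sum_type] at h2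
      simp only [c, PiLp.toLp_apply, if_pos hi] at h2
      rw [← Real.exp_log (hwpos i hiu), h2]
      congr 1
      simp
    · intro i hi
      have hiu : i ∈ u := Finset.mem_union_right _ hi
      have happ : (∑ j, μ j • c j) (⟨i, hiu⟩ : ↥u) = φ ⟨i, hiu⟩ := by rw [hμ]
      rw [WithLp.ofLp_sum, Finset.sum_apply] at happ
      have h2 : Real.log (w i) = ∑ j, μ j * c j ⟨i, hiu⟩ := by
        have h3 : φ (⟨i, hiu⟩ : ↥u) = ∑ j, μ j * c j ⟨i, hiu⟩ := by
          rw [← happ]; exact Finset.sum_congr rfl fun j _ => rfl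
        exact h3
      rw [Fintype.sum_sum_type, Fintype.sum_sum_type] at h2
      simp only [c, PiLp.toLp_apply, if_neg (hnS1 i hi)] at h2
      rw [← Real.exp_log (hwpos i hiu), h2]
      congr 1
      simp [mul_neg]
      ring
  refine ⟨l1, l0, γ, hw1, hw0, ?_⟩
  -- STEP C: dual optimality
  intro l1' l0' γ'
  have hc : (0:ℝ) ≤ 1/ns := by positivity
  -- group S1
  have h1 := group_bound S1 w
    (fun i => (∑ k, l1 k * H (X i) k) + ∑ k, γ k * G (X i) k)
    (fun i => (∑ k, l1' k * H (X i) k) + ∑ k, γ' k * G (X i) k) hw1 (1/ns) hc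
  have h0 := group_bound S0 w
    (fun i => (∑ k, l0 k * H (X i) k) - ∑ k, γ k * G (X i) k)
    (fun i => (∑ k, l0' k * H (X i) k) - ∑ k, γ' k * G (X i) k) hw0 (1/ns) hc
  -- rewrite LHS of h1
  have e1 : (1/ns) * ∑ i ∈ S1, w i *
      (((∑ k, l1' k * H (X i) k) + ∑ k, γ' k * G (X i) k)
        - ((∑ k, l1 k * H (X i) k) + ∑ k, γ k * G (X i) k))
      = ∑ k, (l1' k - l1 k) * Hbar k
        + ∑ k, (γ' k - γ k) * ((1/ns) * ∑ i ∈ S1, w i * G (X i) k) := by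
    have step1 : ∑ i ∈ S1, w i *
        (((∑ k, l1' k * H (X i) k) + ∑ k, γ' k * G (X i) k)
          - ((∑ k, l1 k * H (X i) k) + ∑ k, γ k * G (X i) k))
        = ∑ i ∈ S1, (w i * (∑ k, (l1' k - l1 k) * H (X i) k)
            + w i * (∑ k, (γ' k - γ k) * G (X i) k)) := by
      refine Finset.sum_congr rfl fun i _ => ?_
      rw [show (∑ k, (l1' k - l1 k) * H (X i) k)
          = ∑ k, l1' k * H (X i) k - ∑ k, l1 k * H (X i) k by
            rw [← Finset.sum_sub_distrib]; exact Finset.sum_congr rfl fun k _ => by ring,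
        show (∑ k, (γ' k - γ k) * G (X i) k)
          = ∑ k, γ' k * G (X i) k - ∑ k, γ k * G (X i) k by
            rw [← Finset.sum_sub_distrib]; exact Finset.sum_congr rfl fun k _ => by ring]
      ring
    rw [step1, Finset.sum_add_distrib, mul_add,
      sum_lincomb S1 w (fun k => l1' k - l1 k) (fun i k => H (X i) k),
      sum_lincomb S1 w (fun k => γ' k - γ k) (fun i k => G (X i) k),
      Finset.mul_sum, Finset.mul_sum]
    congr 1
    · refine Finset.sum_congr rfl fun k _ => ?_
      rw [← hcon1 k]; ring
    · refine Finset.sum_congr rfl fun k _ => ?_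
      ring
  have e0 : (1/ns) * ∑ i ∈ S0, w i *
      (((∑ k, l0' k * H (X i) k) - ∑ k, γ' k * G (X i) k)
        - ((∑ k, l0 k * H (X i) k) - ∑ k, γ k * G (X i) k))
      = ∑ k, (l0' k - l0 k) * Hbar k
        - ∑ k, (γ' k - γ k) * ((1/ns) * ∑ i ∈ S1, w i * G (X i) k) := by
    have step1 : ∑ i ∈ S0, w i *
        (((∑ k, l0' k * H (X i) k) - ∑ k, γ' k * G (X i) k)
          - ((∑ k, l0 k * H (X i) k) - ∑ k, γ k * G (X i) k))
        = ∑ i ∈ S0, (w i * (∑ k, (l0' k - l0 k) * H (X i) k)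
            - w i * (∑ k, (γ' k - γ k) * G (X i) k)) := by
      refine Finset.sum_congr rfl fun i _ => ?_
      rw [show (∑ k, (l0' k - l0 k) * H (X i) k)
          = ∑ k, l0' k * H (X i) k - ∑ k, l0 k * H (X i) k by
            rw [← Finset.sum_sub_distrib]; exact Finset.sum_congr rfl fun k _ => by ring,
        show (∑ k, (γ' k - γ k) * G (X i) k)
          = ∑ k, γ' k * G (X i) k - ∑ k, γ k * G (X i) k by
            rw [← Finset.sum_sub_distrib]; exact Finset.sum_congr rfl fun k _ => by ring]
      ring
    rw [step1, Finset.sum_sub_distrib, mul_sub,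
      sum_lincomb S0 w (fun k => l0' k - l0 k) (fun i k => H (X i) k),
      sum_lincomb S0 w (fun k => γ' k - γ k) (fun i k => G (X i) k),
      Finset.mul_sum, Finset.mul_sum]
    congr 1
    · refine Finset.sum_congr rfl fun k _ => ?_
      rw [← hcon0 k]; ring
    · refine Finset.sum_congr rfl fun k _ => ?_
      rw [show (1/ns) * ∑ i ∈ S1, w i * G (X i) k
          = (1/ns) * ∑ i ∈ S0, w i * G (X i) k from hconG k]
      ring
  rw [e1] at h1
  rw [e0] at h0
  have hsum : ∑ k, (l1' k + l0' k) * Hbar k - ∑ k, (l1 k + l0 k) * Hbar k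
      = ∑ k, (l1' k - l1 k) * Hbar k + ∑ k, (l0' k - l0 k) * Hbar k := by
    rw [← Finset.sum_sub_distrib, ← Finset.sum_add_distrib]
    exact Finset.sum_congr rfl fun k _ => by ring
  linarith
end
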